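/- arXiv:0907.0162 — 2 statements merged into one kernel-verified Lean document; each statement's English description precedes it below -/
import Mathlib

section
/- For any fraction γ_i in the Farey sequence F_Q (with Q ≥ 2), the index satisfies ν_2(γ_i) = ⌊(Q + q_{i-1})/q_i⌋. -/
/-!
Consecutive terms `a/b < c/d` of the periodically extended Farey sequence are neighbours: no
rational of denominator at most `Q` lies strictly between them. Hence `b + d > Q`, since
otherwise the mediant `(a + c)/(b + d)` would lie between them, and `bc - ad = 1`, since a
solution of `bx - ay = 1` with `Q - b < y ≤ Q` gives a fraction `x/y` just above `a/b` that can
only be `c/d`. The two determinant identities at `i - 1` and `i` give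
`ν₂(γᵢ) qᵢ = q_{i-1} + q_{i+1}`, and `q_{i+1} ≤ Q < qᵢ + q_{i+1}` identifies `ν₂(γᵢ)` as the floor.
-/

open MeasureTheory

/-- The Farey fractions of order `Q`, as a set of rationals in `(0,1]`
with denominator at most `Q` (rationals are automatically in lowest terms). -/
def fareySet (Q : ℕ) : Set ℚ := {x | 0 < x ∧ x ≤ 1 ∧ x.den ≤ Q}

/-- `IsFarey Q N p q` asserts that `i ↦ p i / q i` (for `1 ≤ i ≤ N`) enumerates the
Farey fractions of order `Q` in increasing order, in lowest terms, extended to all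
integer indices by the periodicity `γ_{i+N} = γ_i + 1`. -/
structure IsFarey (Q N : ℕ) (p q : ℤ → ℤ) : Prop where
  qpos : ∀ i : ℤ, 0 < q i
  coprime : ∀ i : ℤ, Int.gcd (p i) (q i) = 1
  mono : ∀ i j : ℤ, i < j → (p i : ℚ) / (q i) < (p j : ℚ) / (q j)
  mem : ∀ i : ℤ, 1 ≤ i → i ≤ (N : ℤ) → ((p i : ℚ) / (q i)) ∈ fareySet Q
  surj : ∀ x ∈ fareySet Q, ∃ i : ℤ, 1 ≤ i ∧ i ≤ (N : ℤ) ∧ (p i : ℚ) / (q i) = x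
  period_p : ∀ i : ℤ, p (i + N) = p i + q i
  period_q : ∀ i : ℤ, q (i + N) = q i

/-- The `k`-index `ν_k(γ_i) = p_{i+k-1} q_{i-1} - p_{i-1} q_{i+k-1}`. -/
def nuk (p q : ℤ → ℤ) (k : ℕ) (i : ℤ) : ℤ :=
  p (i + k - 1) * q (i - 1) - p (i - 1) * q (i + k - 1)

open scoped Rat

theorem Rat.divInt_lt_divInt {a b c d : ℤ} (hb : 0 < b) (hd : 0 < d) :
    a /. b < c /. d ↔ a * d < c * b := by
  simpa only [not_le] using (Rat.divInt_le_divInt hd hb).not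

theorem Rat.lt_iff_num_mul_den_lt {r s : ℚ} : r < s ↔ r.num * s.den < s.num * r.den := by
  conv_lhs => rw [← r.num_divInt_den, ← s.num_divInt_den]
  exact Rat.divInt_lt_divInt (by exact_mod_cast r.den_pos) (by exact_mod_cast s.den_pos)

theorem Rat.den_divInt_le {a b : ℤ} (hb : 0 < b) : ((a /. b).den : ℤ) ≤ b :=
  Int.le_of_dvd hb (Rat.den_dvd a b)

theorem Int.exists_mul_sub_mul_eq_one_of_isCoprime {a b : ℤ} (hab : IsCoprime a b) (hb : 0 < b)
    (Q : ℤ) : ∃ x y : ℤ, b * x - a * y = 1 ∧ Q - b < y ∧ y ≤ Q := by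
  obtain ⟨u, v, huv⟩ := hab
  set t := (Q + u) / b
  refine ⟨v + a * t, -u + b * t, by linear_combination huv, ?_, ?_⟩
  · linarith [Int.mul_ediv_add_emod (Q + u) b, Int.emod_lt_of_pos (Q + u) hb]
  · linarith [Int.mul_ediv_add_emod (Q + u) b, Int.emod_nonneg (Q + u) hb.ne']

theorem Int.floor_add_div_eq_of_mul_eq {K : Type*} [Field K] [LinearOrder K]
    [IsStrictOrderedRing K] [FloorRing K] {x : K} {a b c n : ℤ} (hb : 0 < b)
    (hn : n * b = a + c) (hc : c ≤ x) (hx : x < b + c) : ⌊(x + a) / b⌋ = n := by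
  have hb' : (0 : K) < b := by exact_mod_cast hb
  have hn' : (n : K) * b = a + c := by exact_mod_cast hn
  rw [Int.floor_eq_iff, le_div_iff₀ hb', div_lt_iff₀ hb']
  constructor <;> linarith

def FareyAdjacent (Q : ℕ) (r s : ℚ) : Prop :=
  r < s ∧ ∀ x : ℚ, r < x → x < s → Q < x.den

namespace FareyAdjacent

variable {Q : ℕ} {r s : ℚ}

theorem lt_den_add_den (h : FareyAdjacent Q r s) : Q < r.den + s.den := by
  have hrs := Rat.lt_iff_num_mul_den_lt.1 h.1
  have hpos : (0 : ℤ) < r.den + s.den := by positivity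
  have hrm : r < (r.num + s.num) /. (r.den + s.den) := by
    conv_lhs => rw [← r.num_divInt_den]
    rw [Rat.divInt_lt_divInt (by positivity) hpos]
    linarith
  have hms : (r.num + s.num) /. (r.den + s.den) < s := by
    conv_rhs => rw [← s.num_divInt_den]
    rw [Rat.divInt_lt_divInt hpos (by positivity)]
    linarith
  have := h.2 _ hrm hms
  have := Rat.den_divInt_le (a := r.num + s.num) hpos
  omega

theorem den_mul_num_sub_num_mul_den (h : FareyAdjacent Q r s) (hr : r.den ≤ Q)
    (hs : s.den ≤ Q) : r.den * s.num - r.num * s.den = 1 := by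
  obtain ⟨x, y, hxy, hQy, hyQ⟩ :=
    Int.exists_mul_sub_mul_eq_one_of_isCoprime r.isCoprime_num_den (by positivity) Q
  have hy : 0 < y := by omega
  have hrz : r < x /. y := by
    conv_lhs => rw [← r.num_divInt_den]
    rw [Rat.divInt_lt_divInt (by positivity) hy]
    linarith
  have hle : s.num * y ≤ x * s.den := by
    by_contra! hzs
    have hzs : x /. y < s := by
      conv_rhs => rw [← s.num_divInt_den]
      rwa [Rat.divInt_lt_divInt hy (by positivity)]
    have := h.2 _ hrz hzs
    have := Rat.den_divInt_le (a := x) hy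
    omega
  have hrs := Rat.lt_iff_num_mul_den_lt.1 h.1
  -- As `r.den * x - r.num * y = 1`, we have
  -- `s.den = r.den * (x * s.den - s.num * y) + y * (r.den * s.num - r.num * s.den)`,
  -- so a strict inequality in `hle` would give `s.den ≥ r.den + y > Q`.
  have heq : s.num * y = x * s.den := by
    by_contra hne
    have hlt : s.num * y + 1 ≤ x * s.den := by omega
    nlinarith
  have hcop : IsCoprime x y := ⟨r.den, -r.num, by linear_combination hxy⟩
  have hden : y = s.den := Int.dvd_antisymm hy.le (by positivity)
    (hcop.symm.dvd_of_dvd_mul_left ⟨s.num, by rw [← heq, mul_comm]⟩)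
    (s.isCoprime_num_den.symm.dvd_of_dvd_mul_left ⟨x, by rw [heq, mul_comm]⟩)
  have hnum : s.num = x := by
    rw [hden] at heq
    exact mul_right_cancel₀ (by positivity) heq
  rw [hnum, ← hden]
  exact hxy

end FareyAdjacent

namespace IsFarey

variable {Q N : ℕ} {p q : ℤ → ℤ}

theorem num_div (hF : IsFarey Q N p q) (i : ℤ) : ((p i : ℚ) / q i).num = p i :=
  Rat.num_div_eq_of_coprime (hF.qpos i) (hF.coprime i)

theorem den_div (hF : IsFarey Q N p q) (i : ℤ) : (((p i : ℚ) / q i).den : ℤ) = q i :=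
  Rat.den_div_eq_of_coprime (hF.qpos i) (hF.coprime i)

theorem period_pos (hF : IsFarey Q N p q) : 0 < N := by
  by_contra! hN
  have := hF.period_p 0
  have := hF.qpos 0
  simp_all

theorem div_add_period (hF : IsFarey Q N p q) (i : ℤ) :
    (p (i + N) : ℚ) / q (i + N) = p i / q i + 1 := by
  have hq : (q i : ℚ) ≠ 0 := by exact_mod_cast (hF.qpos i).ne'
  rw [hF.period_p, hF.period_q]
  push_cast
  field_simp

theorem div_add_mul_period (hF : IsFarey Q N p q) (i k : ℤ) :
    (p (i + k * N) : ℚ) / q (i + k * N) = p i / q i + k := by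
  induction k using Int.induction_on with
  | zero => simp
  | succ k ih =>
    rw [show i + (k + 1) * N = i + k * N + N by ring, hF.div_add_period, ih]
    push_cast; ring
  | pred k ih =>
    have := hF.div_add_period (i + (-k - 1) * N)
    rw [show i + (-k - 1) * N + N = i + -k * N by ring, ih] at this
    push_cast at this ⊢
    linarith

theorem den_le (hF : IsFarey Q N p q) (i : ℤ) : q i ≤ Q := by
  have hN : (0 : ℤ) < N := by exact_mod_cast hF.period_pos
  set j := (i - 1) % N + 1
  have hi : i = j + (i - 1) / N * N := by
    linarith [Int.mul_ediv_add_emod (i - 1) N]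
  have hj := hF.mem j (by linarith [Int.emod_nonneg (i - 1) hN.ne'])
    (by linarith [Int.emod_lt_of_pos (i - 1) hN])
  have := hF.div_add_mul_period j ((i - 1) / N)
  rw [← hi] at this
  rw [← hF.den_div i, this, Rat.add_intCast_den]
  exact_mod_cast hj.2.2

theorem exists_div_eq (hF : IsFarey Q N p q) {x : ℚ} (hx : x.den ≤ Q) :
    ∃ i, (p i : ℚ) / q i = x := by
  have hmem : x - (⌈x⌉ - 1 : ℤ) ∈ fareySet Q := by
    refine ⟨?_, ?_, ?_⟩
    · push_cast; linarith [Int.ceil_lt_add_one x]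
    · push_cast; linarith [Int.le_ceil x]
    · rwa [Rat.sub_intCast_den]
  obtain ⟨j, -, -, hj⟩ := hF.surj _ hmem
  exact ⟨j + (⌈x⌉ - 1) * N, by rw [hF.div_add_mul_period, hj]; ring⟩

theorem fareyAdjacent (hF : IsFarey Q N p q) (i : ℤ) :
    FareyAdjacent Q ((p i : ℚ) / q i) ((p (i + 1) : ℚ) / q (i + 1)) := by
  have hmono : StrictMono fun j => (p j : ℚ) / q j := fun j k hjk => hF.mono j k hjk
  refine ⟨hmono (lt_add_one i), fun x hix hxi => ?_⟩
  by_contra! hx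
  obtain ⟨j, rfl⟩ := hF.exists_div_eq hx
  have := hmono.lt_iff_lt.1 hix
  have := hmono.lt_iff_lt.1 hxi
  omega

theorem mul_sub_mul_eq_one (hF : IsFarey Q N p q) (i : ℤ) :
    q i * p (i + 1) - p i * q (i + 1) = 1 := by
  have := (hF.fareyAdjacent i).den_mul_num_sub_num_mul_den
    (by exact_mod_cast (hF.den_div i).trans_le (hF.den_le i))
    (by exact_mod_cast (hF.den_div (i + 1)).trans_le (hF.den_le (i + 1)))
  rwa [hF.num_div, hF.num_div, hF.den_div, hF.den_div] at this

theorem lt_add (hF : IsFarey Q N p q) (i : ℤ) : (Q : ℤ) < q i + q (i + 1) := by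
  rw [← hF.den_div i, ← hF.den_div (i + 1)]
  exact_mod_cast (hF.fareyAdjacent i).lt_den_add_den

end IsFarey

theorem nuk_two (p q : ℤ → ℤ) (i : ℤ) :
    nuk p q 2 i = p (i + 1) * q (i - 1) - p (i - 1) * q (i + 1) := by
  rw [nuk, show i + ((2 : ℕ) : ℤ) - 1 = i + 1 by omega]

theorem nu2_eq_floor_general (Q N : ℕ) (p q : ℤ → ℤ)
    (hF : IsFarey Q N p q) (i : ℤ) :
    nuk p q 2 i = ⌊(((Q : ℚ)) + (q (i - 1) : ℚ)) / (q i : ℚ)⌋ := by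
  have hprev := hF.mul_sub_mul_eq_one (i - 1)
  rw [sub_add_cancel] at hprev
  have hnext := hF.mul_sub_mul_eq_one i
  refine (Int.floor_add_div_eq_of_mul_eq (hF.qpos i) ?_ (mod_cast hF.den_le (i + 1))
    (mod_cast hF.lt_add i)).symm
  rw [nuk_two]
  linear_combination q (i - 1) * hnext + q (i + 1) * hprev

/-- The index satisfies `ν_2(γ_i) = ⌊(Q + q_{i-1}) / q_i⌋`. -/
theorem nu2_eq_floor (Q N : ℕ) (p q : ℤ → ℤ) (hQ : 2 ≤ Q)
    (hF : IsFarey Q N p q) (i : ℤ) (h1 : 1 ≤ i) (h2 : i ≤ (N : ℤ)) :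
    nuk p q 2 i = ⌊(((Q : ℚ)) + (q (i - 1) : ℚ)) / (q i : ℚ)⌋ :=
  nu2_eq_floor_general Q N p q hF i
end

section
/- For any consecutive denominators q_{i-1}, q_i of the Farey sequence F_Q and any nonnegative integer m, iterating the Farey triangle map gives T^m(q_{i-1}/Q, q_i/Q) = (q_{i+m-1}/Q, q_{i+m}/Q); consequently κ_{m+1}(q_{i-1}/Q, q_i/Q) = ν_2(γ_{i+m}), where κ_1(x,y) = ⌊(1+x)/y⌋ and κ_{m+1} = κ_1 ∘ T^m. -/
open MeasureTheory

/-- The Farey triangle `𝒯 = {(x,y) ∈ [0,1]² : x + y > 1}`. -/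
def fareyTriangle : Set (ℝ × ℝ) :=
  {v | v.1 ∈ Set.Icc (0 : ℝ) 1 ∧ v.2 ∈ Set.Icc (0 : ℝ) 1 ∧ 1 < v.1 + v.2}

/-- The Farey triangle map `T(x,y) = (y, ⌊(1+x)/y⌋·y − x)`. -/
noncomputable def Tmap (v : ℝ × ℝ) : ℝ × ℝ :=
  (v.2, (⌊(1 + v.1) / v.2⌋ : ℝ) * v.2 - v.1)

/-!
Consecutive Farey fractions `γ_j = p_j / q_j` satisfy `p_{j+1} q_j - p_j q_{j+1} = 1` and
`Q < q_j + q_{j+1}`: the solution `x / y` of `x q_j - y p_j = 1` with `Q - q_j < y ≤ Q` is a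
Farey fraction above `γ_j`, and a Farey fraction strictly between the two would have denominator
at least `q_j + y > Q`, so `x / y = γ_{j+1}`. Both facts are `N`-periodic in `j`, hence hold for
all `j`. Subtracting two consecutive determinant identities gives `q_j ∣ q_{j-1} + q_{j+1}`, and
`q_{j+1} ≤ Q < q_j + q_{j+1}` identifies the quotient as `⌊(Q + q_{j-1}) / q_j⌋`; this says
exactly that `T` sends `(q_{j-1}/Q, q_j/Q)` to `(q_j/Q, q_{j+1}/Q)`.
-/

theorem exists_mul_sub_mul_eq_one_mem_Ioc {a b : ℤ} (hab : IsCoprime a b) (hb : 0 < b) (Q : ℤ) :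
    ∃ x y : ℤ, x * b - y * a = 1 ∧ y ∈ Set.Ioc (Q - b) Q := by
  obtain ⟨u, v, huv⟩ := hab
  refine ⟨v + (Q + u) / b * a, Q - (Q + u) % b, ?_, ?_, ?_⟩
  · linear_combination huv + a * Int.emod_add_mul_ediv (Q + u) b
  · linarith [Int.emod_lt_of_pos (Q + u) hb]
  · linarith [Int.emod_nonneg (Q + u) hb.ne']

theorem add_le_of_mul_sub_mul_eq_one {a b c d x y : ℤ} (hb : 0 ≤ b) (hy : 0 ≤ y)
    (hxy : x * b - y * a = 1) (hac : 1 ≤ c * b - a * d) (hcx : 1 ≤ x * d - y * c) :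
    b + y ≤ d := by
  -- `d = d (x b - y a) = b (x d - y c) + y (c b - a d)`
  nlinarith

theorem one_add_div_div_div {Q : ℝ} (hQ : Q ≠ 0) (a b : ℝ) :
    (1 + a / Q) / (b / Q) = (Q + a) / b := by
  rw [one_add_div hQ, div_div_div_cancel_right₀ hQ]

theorem Tmap_div_eq {Q a b c : ℤ} (hQ : 0 < Q) (hb : 0 < b) (hdvd : b ∣ a + c)
    (hcQ : c ≤ Q) (hQbc : Q < b + c) :
    Tmap ((a : ℝ) / Q, (b : ℝ) / Q) = ((b : ℝ) / Q, (c : ℝ) / Q) := by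
  obtain ⟨ν, hν⟩ := hdvd
  have hfloor : ⌊((Q : ℝ) + a) / b⌋ = ν := by
    rw [Int.floor_eq_iff, le_div_iff₀ (by exact_mod_cast hb), div_lt_iff₀ (by exact_mod_cast hb)]
    constructor <;> norm_cast <;> linarith
  have hc : (c : ℝ) = ν * b - a := by push_cast [show c = ν * b - a by linarith]; rfl
  simp only [Tmap, one_add_div_div_div (by positivity : (Q : ℝ) ≠ 0), hfloor, hc]
  ext <;> simp only [sub_div, mul_div_assoc]

theorem iterate_apply_of_map_eq_succ {α : Type*} {f : α → α} {v : ℤ → α}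
    (h : ∀ j, f (v j) = v (j + 1)) (j : ℤ) (m : ℕ) : f^[m] (v j) = v (j + m) := by
  simpa using ((Function.Semiconj.iterate_right (ga := (· + 1)) (fun j => (h j).symm) m) j).symm

theorem intCast_div_lt_intCast_div_iff {a b c d : ℤ} (hb : 0 < b) (hd : 0 < d) :
    (a : ℚ) / b < c / d ↔ a * d < c * b := by
  rw [div_lt_div_iff₀ (by exact_mod_cast hb) (by exact_mod_cast hd)]
  exact_mod_cast Iff.rfl

structure IsConsecutiveFarey (Q : ℕ) (a b c d : ℤ) : Prop where
  det : c * b - a * d = 1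
  lt_add : (Q : ℤ) < b + d
  left_le : b ≤ Q
  right_le : d ≤ Q

theorem isConsecutiveFarey_add_add_iff {Q : ℕ} {a b c d : ℤ} :
    IsConsecutiveFarey Q (a + b) b (c + d) d ↔ IsConsecutiveFarey Q a b c d := by
  constructor <;> rintro ⟨hdet, hlt, hb, hd⟩ <;> exact ⟨by linarith, hlt, hb, hd⟩

namespace IsFarey

variable {Q N : ℕ} {p q : ℤ → ℤ}

theorem strictMono (hF : IsFarey Q N p q) : StrictMono fun i => (p i : ℚ) / q i :=
  fun _ _ h => hF.mono _ _ h

theorem one_le_N (hF : IsFarey Q N p q) : 1 ≤ N := by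
  by_contra! hN
  have := hF.period_p 0
  simp_all [(hF.qpos 0).ne']

theorem den_eq (hF : IsFarey Q N p q) (j : ℤ) : (((p j : ℚ) / q j).den : ℤ) = q j :=
  Rat.den_div_eq_of_coprime (hF.qpos j) (hF.coprime j)

theorem q_le_of_one_le (hF : IsFarey Q N p q) {j : ℤ} (hj1 : 1 ≤ j) (hjN : j ≤ N) :
    q j ≤ Q := by
  rw [← hF.den_eq j]
  exact_mod_cast (hF.mem j hj1 hjN).2.2

theorem one_le_Q (hF : IsFarey Q N p q) : 1 ≤ Q := by
  have := hF.q_le_of_one_le le_rfl (by exact_mod_cast hF.one_le_N)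
  have := hF.qpos 1
  omega

theorem p_N_eq_one_and_q_N_eq_one (hF : IsFarey Q N p q) : p N = 1 ∧ q N = 1 := by
  have hN : (1 : ℤ) ≤ N := by exact_mod_cast hF.one_le_N
  obtain ⟨k, hk1, hkN, hk⟩ := hF.surj 1 ⟨one_pos, le_rfl, by simpa using hF.one_le_Q⟩
  have hγN : (p N : ℚ) / q N = 1 :=
    le_antisymm (hF.mem N hN le_rfl).2.1 (hk ▸ hF.strictMono.monotone hkN)
  have hpq : p N = q N := by
    rw [div_eq_one_iff_eq (by exact_mod_cast (hF.qpos N).ne')] at hγN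
    exact_mod_cast hγN
  have hq : q N = 1 := by
    have hgcd := hF.coprime N
    rw [hpq, Int.gcd_self] at hgcd
    have := hF.qpos N
    omega
  exact ⟨hpq.trans hq, hq⟩

theorem p_zero_eq_zero_and_q_zero_eq_one (hF : IsFarey Q N p q) : p 0 = 0 ∧ q 0 = 1 := by
  have hp := hF.period_p 0
  have hq := hF.period_q 0
  rw [zero_add] at hp hq
  obtain ⟨hpN, hqN⟩ := hF.p_N_eq_one_and_q_N_eq_one
  omega

theorem q_le (hF : IsFarey Q N p q) {j : ℤ} (hj0 : 0 ≤ j) (hjN : j ≤ N) : q j ≤ Q := by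
  rcases hj0.eq_or_lt with rfl | hj1
  · rw [hF.p_zero_eq_zero_and_q_zero_eq_one.2]
    exact_mod_cast hF.one_le_Q
  · exact hF.q_le_of_one_le hj1 hjN

theorem p_nonneg_lt_q (hF : IsFarey Q N p q) {j : ℤ} (hj0 : 0 ≤ j) (hjN : j < N) :
    0 ≤ p j ∧ p j < q j := by
  have hq : (0 : ℚ) < q j := by exact_mod_cast hF.qpos j
  have h0 := hF.strictMono.monotone hj0
  have h1 := hF.strictMono hjN
  simp only [hF.p_zero_eq_zero_and_q_zero_eq_one, hF.p_N_eq_one_and_q_N_eq_one, Int.cast_zero, Int.cast_one,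
    div_one] at h0 h1
  rw [le_div_iff₀ hq, zero_mul] at h0
  rw [div_lt_one hq] at h1
  exact ⟨by exact_mod_cast h0, by exact_mod_cast h1⟩

theorem succ_le_of_lt_mem (hF : IsFarey Q N p q) {j : ℤ} {x : ℚ} (hx : x ∈ fareySet Q)
    (hjx : (p j : ℚ) / q j < x) : (p (j + 1) : ℚ) / q (j + 1) ≤ x := by
  obtain ⟨k, -, -, rfl⟩ := hF.surj x hx
  exact hF.strictMono.monotone (hF.strictMono.lt_iff_lt.mp hjx)

theorem isConsecutiveFarey_of_nonneg_of_lt (hF : IsFarey Q N p q) {j : ℤ} (hj0 : 0 ≤ j)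
    (hjN : j < N) : IsConsecutiveFarey Q (p j) (q j) (p (j + 1)) (q (j + 1)) := by
  obtain ⟨hp0, hpq⟩ := hF.p_nonneg_lt_q hj0 hjN
  have hq := hF.qpos j
  have hq' := hF.qpos (j + 1)
  have hqQ := hF.q_le hj0 hjN.le
  have hqQ' := hF.q_le_of_one_le (by omega : 1 ≤ j + 1) hjN
  obtain ⟨x, y, hxy, hyQ, hyQ'⟩ :=
    exists_mul_sub_mul_eq_one_mem_Ioc (Int.isCoprime_iff_gcd_eq_one.mpr (hF.coprime j)) hq Q
  have hy : 0 < y := by linarith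
  have hxy_gcd : Int.gcd x y = 1 := Int.isCoprime_iff_gcd_eq_one.mp ⟨q j, -p j, by linarith⟩
  have hjx : (p j : ℚ) / q j < x / y := by
    rw [intCast_div_lt_intCast_div_iff hq hy]
    linarith
  have hx_mem : (x : ℚ) / y ∈ fareySet Q := by
    refine ⟨?_, ?_, ?_⟩
    · exact (div_nonneg (by exact_mod_cast hp0) (by exact_mod_cast hq.le)).trans_lt hjx
    · rw [div_le_one (by exact_mod_cast hy)]
      exact_mod_cast (show x ≤ y by nlinarith)
    · have := Rat.den_div_eq_of_coprime hy hxy_gcd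
      omega
  rcases (hF.succ_le_of_lt_mem hx_mem hjx).eq_or_lt with heq | hlt
  · obtain ⟨rfl, rfl⟩ := Rat.div_int_inj hq' hy (hF.coprime (j + 1)) hxy_gcd heq
    exact ⟨by linarith, by linarith, hqQ, hqQ'⟩
  · have hdet := (intCast_div_lt_intCast_div_iff hq hq').mp (hF.mono j (j + 1) (by omega))
    have hdet' := (intCast_div_lt_intCast_div_iff hq' hy).mp hlt
    have := add_le_of_mul_sub_mul_eq_one (c := p (j + 1)) (d := q (j + 1)) hq.le hy.le hxy
      (by linarith) (by linarith)
    omega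

theorem isConsecutiveFarey (hF : IsFarey Q N p q) (j : ℤ) :
    IsConsecutiveFarey Q (p j) (q j) (p (j + 1)) (q (j + 1)) := by
  have hper : Function.Periodic
      (fun j => IsConsecutiveFarey Q (p j) (q j) (p (j + 1)) (q (j + 1))) N := by
    intro j
    simp only [add_right_comm j (N : ℤ) 1, hF.period_p, hF.period_q]
    exact propext isConsecutiveFarey_add_add_iff
  have hN : (0 : ℤ) < N := by exact_mod_cast hF.one_le_N
  have hjP := hper.int_mul (j / N) (j % N)
  rw [Int.cast_id, mul_comm, Int.emod_add_mul_ediv] at hjP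
  exact hjP ▸ hF.isConsecutiveFarey_of_nonneg_of_lt (Int.emod_nonneg j hN.ne')
    (Int.emod_lt_of_pos j hN)

theorem q_dvd_add (hF : IsFarey Q N p q) (j : ℤ) : q j ∣ q (j - 1) + q (j + 1) := by
  have hprev := (hF.isConsecutiveFarey (j - 1)).det
  rw [sub_add_cancel] at hprev
  have hcop : IsCoprime (q j) (p j) := Int.isCoprime_iff_gcd_eq_one.mpr (by
    rw [Int.gcd_comm]; exact hF.coprime j)
  refine hcop.dvd_of_dvd_mul_left ⟨p (j - 1) + p (j + 1), ?_⟩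
  linear_combination hprev - (hF.isConsecutiveFarey j).det

theorem Tmap_step (hF : IsFarey Q N p q) (j : ℤ) :
    Tmap ((q (j - 1) : ℝ) / Q, (q j : ℝ) / Q) = ((q j : ℝ) / Q, (q (j + 1) : ℝ) / Q) := by
  obtain ⟨-, hsum, -, hqQ⟩ := hF.isConsecutiveFarey j
  have h := Tmap_div_eq (Q := Q) (by exact_mod_cast hF.one_le_Q) (hF.qpos j) (hF.q_dvd_add j)
    hqQ hsum
  simpa only [Int.cast_natCast] using h

theorem Tmap_iterate (hF : IsFarey Q N p q) (i : ℤ) (m : ℕ) :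
    Tmap^[m] ((q (i - 1) : ℝ) / Q, (q i : ℝ) / Q) =
      ((q (i + m - 1) : ℝ) / Q, (q (i + m) : ℝ) / Q) := by
  have := iterate_apply_of_map_eq_succ (f := Tmap)
    (v := fun j => ((q (j - 1) : ℝ) / Q, (q j : ℝ) / Q)) (fun j => by simpa using hF.Tmap_step j) i m
  simpa using this

end IsFarey

theorem Tmap_iterate_farey_general (Q N : ℕ) (p q : ℤ → ℤ)
    (hF : IsFarey Q N p q) (i : ℤ) (m : ℕ) :
    Tmap^[m] ((q (i - 1) : ℝ) / Q, (q i : ℝ) / Q) =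
        ((q (i + m - 1) : ℝ) / Q, (q (i + m) : ℝ) / Q) ∧
      ⌊(1 + (Tmap^[m] ((q (i - 1) : ℝ) / Q, (q i : ℝ) / Q)).1) /
          (Tmap^[m] ((q (i - 1) : ℝ) / Q, (q i : ℝ) / Q)).2⌋ =
        ⌊((Q : ℝ) + (q (i + m - 1) : ℝ)) / (q (i + m) : ℝ)⌋ := by
  have hQ : (Q : ℝ) ≠ 0 := by exact_mod_cast (Nat.one_le_iff_ne_zero.mp hF.one_le_Q)
  rw [hF.Tmap_iterate i m]
  exact ⟨rfl, by rw [one_add_div_div_div hQ]⟩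

/-- Iterating the Farey triangle map:
`T^m(q_{i-1}/Q, q_i/Q) = (q_{i+m-1}/Q, q_{i+m}/Q)`, and consequently
`κ_{m+1}(q_{i-1}/Q, q_i/Q) = ν_2(γ_{i+m}) = ⌊(Q + q_{i+m-1})/q_{i+m}⌋`,
where `κ_1(x,y) = ⌊(1+x)/y⌋` and `κ_{m+1} = κ_1 ∘ T^m`. -/
theorem Tmap_iterate_farey (Q N : ℕ) (p q : ℤ → ℤ) (hQ : 1 ≤ Q)
    (hF : IsFarey Q N p q) (i : ℤ) (h1 : 1 ≤ i) (h2 : i ≤ (N : ℤ)) (m : ℕ) :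
    Tmap^[m] ((q (i - 1) : ℝ) / Q, (q i : ℝ) / Q) =
        ((q (i + m - 1) : ℝ) / Q, (q (i + m) : ℝ) / Q) ∧
      ⌊(1 + (Tmap^[m] ((q (i - 1) : ℝ) / Q, (q i : ℝ) / Q)).1) /
          (Tmap^[m] ((q (i - 1) : ℝ) / Q, (q i : ℝ) / Q)).2⌋ =
        ⌊((Q : ℝ) + (q (i + m - 1) : ℝ)) / (q (i + m) : ℝ)⌋ :=
  Tmap_iterate_farey_general Q N p q hF i m
end
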